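/- arXiv:2106.12726 — 7 statements merged into one kernel-verified Lean document; each statement's English description precedes it below -/
import Mathlib

section
/- Let K be an infinite field, let n ≥ 1, and let 1 ≤ r < n. If f is a multilinear polynomial of degree m whose image on UT_n(K) equals J^r, then f is a polynomial identity of UT_r(K) and f is not a polynomial identity of UT_{r+1}(K). -/
/-- Evaluation of the multilinear polynomial `∑ σ, α σ • x_{σ(1)} ⋯ x_{σ(m)}`
at the tuple `a` of elements of the `K`-algebra `A`. -/
noncomputable def mEval {K A : Type*} [Field K] [Ring A] [Algebra K A]
    {m : ℕ} (α : Equiv.Perm (Fin m) → K) (a : Fin m → A) : A :=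
  ∑ σ : Equiv.Perm (Fin m), α σ • (List.ofFn fun i => a (σ i)).prod

/-- `M` is an upper triangular matrix, i.e. an element of `UT_n(K)`. -/
def IsUT {K : Type*} [Field K] {n : ℕ} (M : Matrix (Fin n) (Fin n) K) : Prop :=
  ∀ i j : Fin n, (j : ℕ) < (i : ℕ) → M i j = 0

/-- `M` lies in `J^r`, the `r`-th power of the Jacobson radical of `UT_n(K)`:
all entries `M i j` with `j - i < r` vanish (`J^0 = UT_n(K)`). -/
def InJpow {K : Type*} [Field K] {n : ℕ} (r : ℕ) (M : Matrix (Fin n) (Fin n) K) : Prop :=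
  ∀ i j : Fin n, (j : ℕ) < (i : ℕ) + r → M i j = 0

/-!
Taking the top-left `k × k` corner is an algebra homomorphism `UT_n(K) → UT_k(K)`, so it
commutes with evaluating `f`. Every element of `UT_r(K)` is the corner of an element of
`UT_n(K)`, and `f` takes values in `J^r`, whose `r × r` corners vanish: hence `f` vanishes on
`UT_r(K)`. Conversely `E_{1,r+1} ∈ J^r` is a value `f(a)`, and passing to the
`(r + 1) × (r + 1)` corners of the arguments gives `f(corner a) = E_{1,r+1} ≠ 0` in
`UT_{r+1}(K)`.
-/

open Matrix

theorem map_mEval {K A B : Type*} [Field K] [Ring A] [Algebra K A] [Ring B] [Algebra K B]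
    {m : ℕ} (φ : A →ₐ[K] B) (α : Equiv.Perm (Fin m) → K) (a : Fin m → A) :
    φ (mEval α a) = mEval α (φ ∘ a) := by
  simp only [mEval, map_sum, map_smul, map_list_prod, List.map_ofFn, Function.comp_def]

theorem isUT_iff_blockTriangular {K : Type*} [Field K] {n : ℕ}
    (M : Matrix (Fin n) (Fin n) K) : IsUT M ↔ M.BlockTriangular id :=
  ⟨fun h _ _ => h _ _, fun h _ _ => @h _ _⟩

section Corner

variable {R : Type*} [CommSemiring R] {k d : ℕ}

abbrev corner (M : Matrix (Fin (k + d)) (Fin (k + d)) R) : Matrix (Fin k) (Fin k) R :=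
  M.submatrix (Fin.castAdd d) (Fin.castAdd d)

theorem corner_mul_of_blockTriangular (A : Matrix (Fin (k + d)) (Fin (k + d)) R)
    {B : Matrix (Fin (k + d)) (Fin (k + d)) R} (hB : B.BlockTriangular id) :
    corner (A * B) = corner A * corner B := by
  ext i j
  have hlower (l : Fin d) : B (Fin.natAdd k l) (Fin.castAdd d j) = 0 :=
    hB (by rw [Fin.lt_def]; simp; omega)
  simp [mul_apply, Fin.sum_univ_add, hlower]

variable (R k d) in
def cornerAlgHom : blockTriangularSubalgebra R R (id : Fin (k + d) → Fin (k + d)) →ₐ[R]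
    Matrix (Fin k) (Fin k) R where
  toFun M := corner (M : Matrix (Fin (k + d)) (Fin (k + d)) R)
  map_one' := submatrix_one _ (Fin.castAdd_injective k d)
  map_mul' M N := corner_mul_of_blockTriangular _ N.2
  map_zero' := rfl
  map_add' _ _ := rfl
  commutes' c := by
    simp [algebraMap_eq_diagonal, submatrix_diagonal _ _ (Fin.castAdd_injective k d)]

theorem exists_blockTriangular_corner_eq {M : Matrix (Fin k) (Fin k) R}
    (hM : M.BlockTriangular id) :
    ∃ N : Matrix (Fin (k + d)) (Fin (k + d)) R, N.BlockTriangular id ∧ corner N = M := by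
  refine ⟨reindex finSumFinEquiv finSumFinEquiv (fromBlocks M 0 0 0), ?_, by ext; simp⟩
  rw [blockTriangular_reindex_iff]
  rintro (i | i) (j | j) hij
  · simp only [Function.comp_apply, finSumFinEquiv_apply_left, id, Fin.lt_def,
      Fin.val_castAdd] at hij
    exact hM (Fin.lt_def.mpr hij)
  all_goals rfl

end Corner

section Image

variable {K : Type*} [Field K] {m : ℕ} (α : Equiv.Perm (Fin m) → K)

def IsUTIdentity (r : ℕ) : Prop :=
  ∀ a : Fin m → Matrix (Fin r) (Fin r) K, (∀ l, IsUT (a l)) → mEval α a = 0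

theorem isUT_corner {k d : ℕ} {M : Matrix (Fin (k + d)) (Fin (k + d)) K} (hM : IsUT M) :
    IsUT (corner M) :=
  fun _ _ hij => hM _ _ hij

theorem corner_eq_zero_of_inJpow {k d : ℕ} {M : Matrix (Fin (k + d)) (Fin (k + d)) K}
    (hM : InJpow k M) : corner M = 0 := by
  ext i j
  exact hM _ _ (by simp; omega)

theorem mEval_corner {k d : ℕ} {a : Fin m → Matrix (Fin (k + d)) (Fin (k + d)) K}
    (ha : ∀ l, IsUT (a l)) : corner (mEval α a) = mEval α (fun l => corner (a l)) := by
  let a' : Fin m → blockTriangularSubalgebra K K (id : Fin (k + d) → Fin (k + d)) :=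
    fun l => ⟨a l, (isUT_iff_blockTriangular _).mp (ha l)⟩
  have hval : mEval α a = ↑(mEval α a') := (map_mEval (Subalgebra.val _) α a').symm
  rw [hval]
  exact map_mEval (cornerAlgHom K k d) α a'

variable {α}

theorem isUTIdentity_of_image_subset {r n : ℕ} (hrn : r ≤ n)
    (himage : ∀ a : Fin m → Matrix (Fin n) (Fin n) K, (∀ l, IsUT (a l)) →
      InJpow r (mEval α a)) :
    IsUTIdentity α r := by
  obtain ⟨d, rfl⟩ := Nat.exists_eq_add_of_le hrn
  intro a ha
  choose N hN hNa using fun l =>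
    exists_blockTriangular_corner_eq (d := d) ((isUT_iff_blockTriangular _).mp (ha l))
  have hN' (l : Fin m) : IsUT (N l) := (isUT_iff_blockTriangular _).mpr (hN l)
  calc mEval α a = mEval α (fun l => corner (N l)) := by simp only [hNa]
    _ = corner (mEval α N) := (mEval_corner α hN').symm
    _ = 0 := corner_eq_zero_of_inJpow (himage N hN')

theorem not_isUTIdentity_succ_of_subset_image {r n : ℕ} (hrn : r < n)
    (himage : ∀ M : Matrix (Fin n) (Fin n) K, InJpow r M →
      ∃ a : Fin m → Matrix (Fin n) (Fin n) K, (∀ l, IsUT (a l)) ∧ mEval α a = M) :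
    ¬ IsUTIdentity α (r + 1) := by
  obtain ⟨d, rfl⟩ := Nat.exists_eq_add_of_le hrn
  intro hPI
  have hE : InJpow r
      (single (Fin.castAdd d (0 : Fin (r + 1))) (Fin.castAdd d (Fin.last r)) (1 : K)) := by
    intro i j hij
    rw [single_apply, if_neg]
    rintro ⟨rfl, rfl⟩
    simp at hij
  obtain ⟨a, ha, haE⟩ := himage _ hE
  have hcorner := congrArg corner haE
  rw [mEval_corner α ha, hPI _ fun l => isUT_corner (ha l)] at hcorner
  simpa using congrFun₂ hcorner 0 (Fin.last r)

end Image

theorem identity_of_image_eq_pow_jacobson_general {K : Type*} [Field K]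
    (n r m : ℕ) (hrn : r < n)
    (α : Equiv.Perm (Fin m) → K)
    (him : {y : Matrix (Fin n) (Fin n) K |
        ∃ a : Fin m → Matrix (Fin n) (Fin n) K, (∀ l, IsUT (a l)) ∧ mEval α a = y}
      = {M : Matrix (Fin n) (Fin n) K | InJpow r M}) :
    (∀ a : Fin m → Matrix (Fin r) (Fin r) K, (∀ l, IsUT (a l)) → mEval α a = 0) ∧
      ¬ ∀ a : Fin m → Matrix (Fin (r + 1)) (Fin (r + 1)) K,
          (∀ l, IsUT (a l)) → mEval α a = 0 := by
  have hmem (M : Matrix (Fin n) (Fin n) K) := Set.ext_iff.mp him M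
  exact ⟨isUTIdentity_of_image_subset hrn.le fun a ha => (hmem _).mp ⟨a, ha, rfl⟩,
    not_isUTIdentity_succ_of_subset_image hrn fun M hM => (hmem M).mpr hM⟩

/-- If the image of a multilinear polynomial `f` on `UT_n(K)` equals `J^r`
(`K` infinite, `1 ≤ r < n`), then `f` is a polynomial identity of `UT_r(K)`
and is not a polynomial identity of `UT_{r+1}(K)`. -/
theorem identity_of_image_eq_pow_jacobson {K : Type*} [Field K] [Infinite K]
    (n r m : ℕ) (hn : 1 ≤ n) (hr : 1 ≤ r) (hrn : r < n) (hm : 1 ≤ m)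
    (α : Equiv.Perm (Fin m) → K)
    (him : {y : Matrix (Fin n) (Fin n) K |
        ∃ a : Fin m → Matrix (Fin n) (Fin n) K, (∀ l, IsUT (a l)) ∧ mEval α a = y}
      = {M : Matrix (Fin n) (Fin n) K | InJpow r M}) :
    (∀ a : Fin m → Matrix (Fin r) (Fin r) K, (∀ l, IsUT (a l)) → mEval α a = 0) ∧
      ¬ ∀ a : Fin m → Matrix (Fin (r + 1)) (Fin (r + 1)) K,
          (∀ l, IsUT (a l)) → mEval α a = 0 :=
  identity_of_image_eq_pow_jacobson_general n r m hrn α him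
end

section
/- Let K be an infinite field and let A be a K-algebra. For every polynomial f = f(x_1, …, x_m) in the free associative algebra K⟨x_1,…,x_m⟩, the K-linear span of the image f(A) is a Lie ideal of A; that is, for every a ∈ A and every v in the K-linear span of f(A), the commutator [a, v] = av − va lies in the K-linear span of f(A). -/
/-!
Put `d i = a c_i - c_i a`. The substitution `x_i ↦ c_i + t d_i` turns `f` into a polynomial in `t`
with coefficients in `A`, whose value at every scalar `t` lies in the span `W` of `f(A)`. Since `K`
is infinite, no nonzero polynomial over `K` vanishes on all of `K`; applied to the images of the
coefficients in `A ⧸ W` under linear functionals, this puts every coefficient in `W`. The linear one is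
`[a, f(c)]`, because `c ↦ a c - c a` is a derivation.
-/

open Polynomial

section PowSmul

variable {K V : Type*} [Field K] [Infinite K] [AddCommGroup V] [Module K V]

theorem eq_zero_of_forall_sum_pow_smul_eq_zero {s : Finset ℕ} {g : ℕ → V}
    (h : ∀ t : K, ∑ k ∈ s, t ^ k • g k = 0) : ∀ k ∈ s, g k = 0 := by
  intro k hk
  rw [← Module.forall_dual_apply_eq_zero_iff K]
  intro φ
  have hzero : (∑ j ∈ s, C (φ (g j)) * X ^ j : K[X]) = 0 := by
    refine Polynomial.funext fun t => ?_
    have hφ := congrArg φ (h t)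
    rw [map_sum, map_zero] at hφ
    simp only [eval_finsetSum, eval_mul, eval_C, eval_pow, eval_X, eval_zero, ← hφ]
    refine Finset.sum_congr rfl fun j _ => ?_
    rw [map_smul, smul_eq_mul, mul_comm]
  simpa [finsetSum_coeff, coeff_C_mul, coeff_X_pow, hk] using congrArg (coeff · k) hzero

theorem Submodule.mem_of_forall_sum_pow_smul_mem (W : Submodule K V) {s : Finset ℕ} {g : ℕ → V}
    (h : ∀ t : K, ∑ k ∈ s, t ^ k • g k ∈ W) : ∀ k ∈ s, g k ∈ W := by
  have hquot : ∀ t : K, ∑ k ∈ s, t ^ k • (Submodule.Quotient.mk (g k) : V ⧸ W) = 0 := fun t => by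
    have hmk := (Submodule.Quotient.mk_eq_zero W).mpr (h t)
    rw [← W.mkQ_apply, map_sum] at hmk
    simpa only [map_smul, Submodule.mkQ_apply] using hmk
  intro k hk
  exact (Submodule.Quotient.mk_eq_zero W).mp (eq_zero_of_forall_sum_pow_smul_eq_zero hquot k hk)

end PowSmul

namespace Polynomial

variable {K A : Type*}

theorem eval_algebraMap_eq_sum_smul [CommSemiring K] [Semiring A] [Algebra K A] (P : A[X])
    (t : K) : P.eval (algebraMap K A t) = ∑ k ∈ Finset.range (P.natDegree + 1), t ^ k • P.coeff k := by
  rw [eval_eq_sum_range]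
  refine Finset.sum_congr rfl fun k _ => ?_
  rw [← map_pow, ← Algebra.commutes, ← Algebra.smul_def]

theorem coeff_mem_of_forall_eval_algebraMap_mem [Field K] [Infinite K] [Ring A] [Algebra K A]
    (W : Submodule K A) {P : A[X]} (h : ∀ t : K, P.eval (algebraMap K A t) ∈ W) (k : ℕ) :
    P.coeff k ∈ W := by
  by_cases hk : k ≤ P.natDegree
  · refine W.mem_of_forall_sum_pow_smul_mem (fun t => ?_) k (Finset.mem_range_succ_iff.mpr hk)
    rw [← eval_algebraMap_eq_sum_smul]
    exact h t
  · rw [coeff_eq_zero_of_natDegree_lt (not_le.mp hk)]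
    exact W.zero_mem

end Polynomial

namespace FreeAlgebra

variable {K A ι : Type*}

theorem eval_lift_C_add_C_mul_X [CommSemiring K] [Semiring A] [Algebra K A] (c d : ι → A)
    (f : FreeAlgebra K ι) (t : K) :
    (lift K (fun i => C (c i) + C (d i) * X) f).eval (algebraMap K A t) = lift K (c + t • d) f := by
  let evalAt : A[X] →ₐ[K] A :=
    eval₂AlgHom (AlgHom.id K A) (algebraMap K A t) fun x => (Algebra.commutes t x).symm
  change (evalAt.comp (lift K fun i => C (c i) + C (d i) * X)) f = _
  congr 1
  ext i
  simp only [Function.comp_apply, AlgHom.comp_apply, lift_ι_apply]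
  change eval (algebraMap K A t) (C (c i) + C (d i) * X) = c i + t • d i
  simp [Algebra.smul_def, Algebra.commutes]

theorem coeff_zero_lift_C_add_C_mul_X [CommSemiring K] [Semiring A] [Algebra K A] (c d : ι → A)
    (f : FreeAlgebra K ι) : (lift K (fun i => C (c i) + C (d i) * X) f).coeff 0 = lift K c f := by
  rw [coeff_zero_eq_eval_zero]
  simpa using eval_lift_C_add_C_mul_X c d f 0

theorem coeff_one_lift_C_add_C_commutator_mul_X [CommRing K] [Ring A] [Algebra K A] (a : A)
    (c : ι → A) (f : FreeAlgebra K ι) :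
    (lift K (fun i => C (c i) + C (a * c i - c i * a) * X) f).coeff 1 =
      a * lift K c f - lift K c f * a := by
  induction f using FreeAlgebra.induction with
  | grade0 r => simp [Polynomial.algebraMap_apply, Algebra.commutes]
  | grade1 i => simp
  | mul x y hx hy =>
    rw [map_mul, mul_coeff_one, hx, hy, coeff_zero_lift_C_add_C_mul_X,
      coeff_zero_lift_C_add_C_mul_X, map_mul]
    noncomm_ring
  | add x y hx hy =>
    rw [map_add, coeff_add, hx, hy, map_add]
    noncomm_ring

end FreeAlgebra

/-- Over an infinite field `K`, for any polynomial `f ∈ K⟨x_1,…,x_m⟩` and any `K`-algebra `A`,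
the `K`-linear span of the image of `f` on `A` is a Lie ideal of `A`. -/
theorem span_image_is_lie_ideal {K A : Type*} [Field K] [Infinite K]
    [Ring A] [Algebra K A] (m : ℕ) (f : FreeAlgebra K (Fin m)) :
    ∀ a : A,
      ∀ v ∈ Submodule.span K {y : A | ∃ c : Fin m → A, FreeAlgebra.lift K c f = y},
        a * v - v * a ∈
          Submodule.span K {y : A | ∃ c : Fin m → A, FreeAlgebra.lift K c f = y} := by
  intro a
  set W := Submodule.span K {y : A | ∃ c : Fin m → A, FreeAlgebra.lift K c f = y}
  suffices W ≤ W.comap (LinearMap.mulLeft K a - LinearMap.mulRight K a) from fun v hv => this hv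
  refine Submodule.span_le.mpr ?_
  rintro _ ⟨c, rfl⟩
  change a * FreeAlgebra.lift K c f - FreeAlgebra.lift K c f * a ∈ W
  rw [← FreeAlgebra.coeff_one_lift_C_add_C_commutator_mul_X]
  refine coeff_mem_of_forall_eval_algebraMap_mem W (fun t => ?_) 1
  rw [FreeAlgebra.eval_lift_C_add_C_mul_X]
  exact Submodule.subset_span ⟨_, rfl⟩
end

section
/- Let K be a field, n ≥ 1, and let f be a multilinear polynomial of degree m. For any upper triangular matrix units E_{i_1,j_1}, …, E_{i_m,j_m} in UT_n(K) (so i_l ≤ j_l for each l), the evaluation f(E_{i_1,j_1}, …, E_{i_m,j_m}) is either the zero matrix or a nonzero scalar multiple of a single upper triangular matrix unit E_{p,q} with p ≤ q. -/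
namespace Matrix

variable {ι κ R : Type*} [PartialOrder ι] [Fintype ι] [DecidableEq ι] [Semiring R]

theorem list_prod_map_single_eq_zero_or (i j : κ → ι) (hij : ∀ l, i l ≤ j l) :
    ∀ L : List κ, L ≠ [] →
      (L.map fun l => single (i l) (j l) (1 : R)).prod = 0 ∨
        ∃ a b, (L.map fun l => single (i l) (j l) (1 : R)).prod = single a b 1 ∧
          IsLeast (i '' {l | l ∈ L}) a ∧ IsGreatest (j '' {l | l ∈ L}) b
  | [], h => absurd rfl h
  | [x], _ => Or.inr ⟨i x, j x, by simp, by simp, by simp⟩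
  | x :: y :: rest, _ => by
    have image_cons (f : κ → ι) :
        f '' {l | l ∈ x :: y :: rest} = insert (f x) (f '' {l | l ∈ y :: rest}) := by
      rw [← Set.image_insert_eq]; congr 1; ext; simp
    rcases list_prod_map_single_eq_zero_or i j hij (y :: rest) (List.cons_ne_nil _ _) with
      h0 | ⟨a, b, hprod, ha, hb⟩
    · left; rw [List.map_cons, List.prod_cons, h0, mul_zero]
    rw [List.map_cons, List.prod_cons, hprod]
    by_cases hxa : j x = a
    · have hxb : j x ≤ b := by
        obtain ⟨l, hl, hla⟩ := ha.1
        exact hxa ▸ hla ▸ (hij l).trans (hb.2 (Set.mem_image_of_mem j hl))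
      refine .inr ⟨i x, b, by rw [hxa, single_mul_single_same, one_mul], ?_, ?_⟩
      · rw [image_cons, IsLeast, lowerBounds_insert]
        exact ⟨Set.mem_insert _ _, le_rfl, fun s hs => (hij x).trans (hxa ▸ ha.2 hs)⟩
      · rw [image_cons, IsGreatest, upperBounds_insert]
        exact ⟨Set.mem_insert_of_mem _ hb.1, hxb, hb.2⟩
    · exact .inl (single_mul_single_of_ne (h := hxa) ..)

theorem list_prod_map_single_mem_span [Nonempty κ] (i j : κ → ι) (hij : ∀ l, i l ≤ j l)
    {L : List κ} (hL : ∀ l, l ∈ L) {a b : ι} (ha : IsLeast (Set.range i) a)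
    (hb : IsGreatest (Set.range j) b) :
    (L.map fun l => single (i l) (j l) (1 : R)).prod ∈ R ∙ single a b 1 := by
  have hL_univ : {l | l ∈ L} = Set.univ := Set.eq_univ_of_forall hL
  have hL_ne : L ≠ [] := List.ne_nil_of_mem (hL (Classical.arbitrary κ))
  rcases list_prod_map_single_eq_zero_or (R := R) i j hij L hL_ne with
    h0 | ⟨a', b', hprod, ha', hb'⟩
  · rw [h0]
    exact zero_mem _
  · rw [hL_univ, Set.image_univ] at ha' hb'
    rw [hprod, ha'.unique ha, hb'.unique hb]
    exact Submodule.mem_span_singleton_self _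

end Matrix

theorem mEval_matrix_units_general {K : Type*} [Field K] (n m : ℕ) (hm : 1 ≤ m)
    (α : Equiv.Perm (Fin m) → K) (i j : Fin m → Fin n) (hij : ∀ l, i l ≤ j l) :
    mEval α (fun l => Matrix.single (i l) (j l) (1 : K)) = 0 ∨
      ∃ (p q : Fin n) (c : K), p ≤ q ∧ c ≠ 0 ∧
        mEval α (fun l => Matrix.single (i l) (j l) (1 : K))
          = c • Matrix.single p q (1 : K) := by
  have : Nonempty (Fin m) := ⟨⟨0, hm⟩⟩
  obtain ⟨l₀, hl₀⟩ := Finite.exists_min i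
  obtain ⟨l₁, hl₁⟩ := Finite.exists_max j
  have hterm (σ : Equiv.Perm (Fin m)) :
      (List.ofFn fun l => Matrix.single (i (σ l)) (j (σ l)) (1 : K)).prod
        ∈ K ∙ Matrix.single (i l₀) (j l₁) 1 := by
    change (List.ofFn ((fun l => Matrix.single (i l) (j l) (1 : K)) ∘ σ)).prod ∈ _
    rw [← List.map_ofFn]
    exact Matrix.list_prod_map_single_mem_span i j hij
      (fun l => List.mem_ofFn.2 (σ.surjective l))
      ⟨⟨l₀, rfl⟩, Set.forall_mem_range.2 hl₀⟩ ⟨⟨l₁, rfl⟩, Set.forall_mem_range.2 hl₁⟩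
  have hmem : mEval α (fun l => Matrix.single (i l) (j l) (1 : K))
      ∈ K ∙ Matrix.single (i l₀) (j l₁) 1 :=
    Submodule.sum_mem _ fun σ _ => Submodule.smul_mem _ (α σ) (hterm σ)
  obtain ⟨c, hc⟩ := Submodule.mem_span_singleton.1 hmem
  rcases eq_or_ne c 0 with rfl | hc0
  · exact .inl (by rw [← hc, zero_smul])
  · exact .inr ⟨_, _, c, (hl₀ l₁).trans (hij l₁), hc0, hc.symm⟩

/-- Any evaluation of a multilinear polynomial on upper triangular matrix units
`E_{i_l, j_l}` (with `i_l ≤ j_l`) is either zero or a nonzero scalar multiple of a single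
upper triangular matrix unit. -/
theorem mEval_matrix_units {K : Type*} [Field K] (n m : ℕ) (hn : 1 ≤ n) (hm : 1 ≤ m)
    (α : Equiv.Perm (Fin m) → K) (i j : Fin m → Fin n) (hij : ∀ l, i l ≤ j l) :
    mEval α (fun l => Matrix.single (i l) (j l) (1 : K)) = 0 ∨
      ∃ (p q : Fin n) (c : K), p ≤ q ∧ c ≠ 0 ∧
        mEval α (fun l => Matrix.single (i l) (j l) (1 : K))
          = c • Matrix.single p q (1 : K) :=
  mEval_matrix_units_general n m hm α i j hij
end

section
/- Let K be an infinite field, let n ≥ 1, and let f = ∑_{σ ∈ S_m} α_σ x_{σ(1)}⋯x_{σ(m)} be a multilinear polynomial of degree m. If there exist admissible data (T, t) with k = n such that β^{(n,T,t)} ≠ 0, then f is not a polynomial identity of UT_{n+1}(K). -/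
/-- Admissible data `(T, t)`: the indices `t 0 < t 1 < ⋯ < t (k-1)` are strictly increasing,
the sets `T i` are pairwise disjoint, and no `T i` contains any `t j`. -/
def Admissible {m k : ℕ} (T : Fin k → Finset (Fin m)) (t : Fin k → Fin m) : Prop :=
  StrictMono t ∧ (∀ i j : Fin k, i ≠ j → Disjoint (T i) (T j)) ∧
    ∀ i j : Fin k, t j ∉ T i

/-- The starting position (0-based) of the `i`-th block, namely
`h_1 + ⋯ + h_{i-1}` where `h_l = |T_l| + 1`. -/
def blockStart {m k : ℕ} (T : Fin k → Finset (Fin m)) (i : Fin k) : ℕ :=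
  ∑ l ∈ Finset.univ.filter (fun l => l < i), ((T l).card + 1)

/-- `σ ∈ S(k, T, t)`: for each `i`, `σ` maps the positions of the `i`-th block onto `T i`,
and the position immediately after the `i`-th block to `t i`. -/
def InSPerm {m k : ℕ} (T : Fin k → Finset (Fin m)) (t : Fin k → Fin m)
    (σ : Equiv.Perm (Fin m)) : Prop :=
  ∀ i : Fin k,
    ((Finset.univ.filter fun p : Fin m =>
        blockStart T i ≤ (p : ℕ) ∧ (p : ℕ) < blockStart T i + (T i).card).image σ = T i) ∧
      ∀ p : Fin m, (p : ℕ) = blockStart T i + (T i).card → σ p = t i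

open scoped Classical in
/-- The coefficient sum `β^{(k,T,t)} = ∑_{σ ∈ S(k,T,t)} α_σ`. -/
noncomputable def mlBeta {K : Type*} [Field K] {m k : ℕ} (α : Equiv.Perm (Fin m) → K)
    (T : Fin k → Finset (Fin m)) (t : Fin k → Fin m) : K :=
  ∑ σ ∈ Finset.univ.filter (InSPerm T t), α σ

section EdgePaths

variable {ι : Type*}

def IsEdgePath {m : ℕ} (e : Fin m → ι × ι) (r s : ι) : Prop :=
  ∃ c : Fin (m + 1) → ι,
    c 0 = r ∧ c (Fin.last m) = s ∧ ∀ p, e p = (c p.castSucc, c p.succ)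

theorem isEdgePath_zero_iff (e : Fin 0 → ι × ι) (r s : ι) : IsEdgePath e r s ↔ r = s :=
  ⟨fun ⟨_, h0, hs, _⟩ => h0.symm.trans hs, fun h => ⟨fun _ => r, rfl, h, finZeroElim⟩⟩

theorem isEdgePath_succ_iff {m : ℕ} (e : Fin (m + 1) → ι × ι) (r s : ι) :
    IsEdgePath e r s ↔ r = (e 0).1 ∧ IsEdgePath (fun p => e p.succ) (e 0).2 s := by
  constructor
  · rintro ⟨c, h0, hs, he⟩
    refine ⟨by rw [he]; exact h0.symm, fun p => c p.succ, by rw [he], hs, fun p => he p.succ⟩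
  · rintro ⟨hr, c, h0, hs, he⟩
    refine ⟨Fin.cons r c, rfl, hs, Fin.cases ?_ fun p => he p⟩
    simp [hr, h0]

theorem IsEdgePath.monotone [Preorder ι] {m : ℕ} {e : Fin m → ι × ι} {r s : ι}
    (h : IsEdgePath e r s) (he : ∀ p, (e p).1 ≤ (e p).2) : Monotone e := by
  obtain ⟨c, -, -, hc⟩ := h
  have hcm : Monotone c := Fin.monotone_iff_le_succ.2 fun p => by simpa [hc p] using he p
  intro p q hpq
  rw [hc p, hc q]
  exact ⟨hcm (Fin.castSucc_le_castSucc_iff.2 hpq), hcm (Fin.succ_le_succ_iff.2 hpq)⟩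

open Classical Matrix in
theorem Matrix.list_prod_ofFn_single_apply {R : Type*} [DecidableEq ι] [Fintype ι] [Semiring R]
    {m : ℕ} (e : Fin m → ι × ι) (r s : ι) :
    (List.ofFn fun p => single (e p).1 (e p).2 (1 : R)).prod r s =
      if IsEdgePath e r s then 1 else 0 := by
  induction m generalizing r with
  | zero => simp [isEdgePath_zero_iff, one_apply]
  | succ m ih =>
    rw [List.ofFn_succ, List.prod_cons, isEdgePath_succ_iff]
    by_cases hr : r = (e 0).1
    · subst hr
      rw [single_mul_apply_same, one_mul, ih]
      simp
    · rw [single_mul_apply_of_ne _ _ _ _ _ hr]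
      simp [hr]

end EdgePaths

open Finset

section Blocks

variable {m n : ℕ} (T : Fin n → Finset (Fin m))

def blockEnd (i : Fin n) : ℕ := blockStart T i + #(T i)

theorem blockStart_eq_sum_Iio (i : Fin n) : blockStart T i = ∑ l ∈ Iio i, (#(T l) + 1) := by
  rw [blockStart, filter_gt_eq_Iio]

theorem blockEnd_add_one (i : Fin n) : blockEnd T i + 1 = ∑ l ∈ Iic i, (#(T l) + 1) := by
  rw [← Iio_insert, sum_insert notMem_Iio_self, blockEnd, blockStart_eq_sum_Iio]
  ring

theorem blockEnd_lt_blockStart {l i : Fin n} (h : l < i) : blockEnd T l < blockStart T i := by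
  rw [Nat.lt_iff_add_one_le, blockEnd_add_one, blockStart_eq_sum_Iio]
  exact sum_le_sum_of_subset fun x hx => mem_Iio.2 ((mem_Iic.1 hx).trans_lt h)

theorem blockStart_eq_blockEnd_add_one {l i : Fin n} (h : (i : ℕ) = l + 1) :
    blockStart T i = blockEnd T l + 1 := by
  rw [blockEnd_add_one, blockStart_eq_sum_Iio, show Iio i = Iic l by
    ext x; simp only [mem_Iio, mem_Iic, Fin.lt_def, Fin.le_def]; omega]

theorem strictMono_blockEnd : StrictMono (blockEnd T) := fun _ _ h =>
  (blockEnd_lt_blockStart T h).trans_le (Nat.le_add_right _ _)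

theorem blockStart_le_of_forall_lt {i : Fin n} {p : ℕ} (h : ∀ l < i, blockEnd T l < p) :
    blockStart T i ≤ p := by
  obtain ⟨i, hi⟩ := i
  cases i with
  | zero => simp [blockStart, Fin.lt_def]
  | succ l =>
    rw [blockStart_eq_blockEnd_add_one T (l := ⟨l, by omega⟩) rfl]
    exact h _ (by simp [Fin.lt_def])

theorem exists_blockStart_le_le_blockEnd (p : ℕ) :
    (∀ l, blockEnd T l < p) ∨ ∃ i, blockStart T i ≤ p ∧ p ≤ blockEnd T i := by
  by_cases h : ∀ l, blockEnd T l < p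
  · exact Or.inl h
  push Not at h
  obtain ⟨i, hi, hmin⟩ := wellFounded_lt.has_min {l | p ≤ blockEnd T l} h
  refine Or.inr ⟨i, blockStart_le_of_forall_lt T fun l hl => ?_, hi⟩
  by_contra! hle
  exact hmin l hle hl

def blockRank (p : ℕ) : ℕ := #{l | blockEnd T l < p}

theorem blockRank_lt_succ (p : ℕ) : blockRank T p < n + 1 :=
  Nat.lt_succ_of_le ((card_le_univ _).trans_eq (Fintype.card_fin n))

theorem blockRank_eq_of_le_of_le {i : Fin n} {p : ℕ} (h₁ : blockStart T i ≤ p)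
    (h₂ : p ≤ blockEnd T i) : blockRank T p = i := by
  rw [blockRank, ← Fin.card_Iio i]
  congr 1
  ext l
  simp only [mem_filter, mem_univ, true_and, mem_Iio]
  refine ⟨fun hl => ?_, fun hl => (blockEnd_lt_blockStart T hl).trans_le h₁⟩
  by_contra! hil
  exact absurd ((strictMono_blockEnd T).monotone hil) (by omega)

theorem blockRank_blockEnd_add_one (i : Fin n) : blockRank T (blockEnd T i + 1) = i + 1 := by
  rw [blockRank, ← Fin.card_Iic i]
  congr 1
  ext l
  simp [(strictMono_blockEnd T).le_iff_le]

theorem blockRank_eq_of_forall_lt {p : ℕ} (h : ∀ l, blockEnd T l < p) : blockRank T p = n := by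
  simp [blockRank, h]

end Blocks

theorem Admissible.sum_card_add_one_le {m n : ℕ} {T : Fin n → Finset (Fin m)}
    {t : Fin n → Fin m} (hTt : Admissible T t) : ∑ l, (#(T l) + 1) ≤ m := by
  obtain ⟨hmono, hdisj, hnotin⟩ := hTt
  have hdisj' : Disjoint (univ.biUnion T) (univ.image t) := by
    simp only [disjoint_left, mem_biUnion, mem_image]
    rintro _ ⟨l, -, hl⟩ ⟨j, -, rfl⟩
    exact hnotin l j hl
  calc ∑ l, (#(T l) + 1) = #(univ.biUnion T) + #(univ.image t) := by
        rw [card_biUnion fun i _ j _ hij => hdisj i j hij,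
          card_image_of_injective _ hmono.injective, sum_add_distrib]
        simp
    _ = #(univ.biUnion T ∪ univ.image t) := (card_union_of_disjoint hdisj').symm
    _ ≤ m := by simpa using card_le_univ (univ.biUnion T ∪ univ.image t)

theorem Admissible.blockEnd_lt {m n : ℕ} {T : Fin n → Finset (Fin m)} {t : Fin n → Fin m}
    (hTt : Admissible T t) (i : Fin n) : blockEnd T i < m := by
  rw [Nat.lt_iff_add_one_le, blockEnd_add_one]
  exact (sum_le_sum_of_subset (subset_univ _)).trans hTt.sum_card_add_one_le

section Edges

variable {m n : ℕ} (T : Fin n → Finset (Fin m)) (t : Fin n → Fin m)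

/-- The matrix unit `e_{a,b}` substituted for `x_j`, recorded as the edge `(a, b)`. -/
noncomputable def varEdge (j : Fin m) : Fin (n + 1) × Fin (n + 1) :=
  if h : ∃ i, t i = j then (h.choose.castSucc, h.choose.succ)
  else if h : ∃ i, j ∈ T i then (h.choose.castSucc, h.choose.castSucc)
  else (Fin.last n, Fin.last n)

theorem varEdge_fst_le_snd (j : Fin m) : (varEdge T t j).1 ≤ (varEdge T t j).2 := by
  unfold varEdge
  split_ifs <;> simp [Fin.castSucc_le_succ]

variable {T t}

theorem varEdge_apply_self (ht : Function.Injective t) (i : Fin n) :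
    varEdge T t (t i) = (i.castSucc, i.succ) := by
  have h : ∃ l, t l = t i := ⟨i, rfl⟩
  rw [varEdge, dif_pos h, ht h.choose_spec]

theorem varEdge_of_mem (hTt : Admissible T t) {i : Fin n} {j : Fin m} (hj : j ∈ T i) :
    varEdge T t j = (i.castSucc, i.castSucc) := by
  obtain ⟨-, hdisj, hnotin⟩ := hTt
  have ht : ¬∃ l, t l = j := by
    rintro ⟨l, rfl⟩
    exact hnotin i l hj
  have h : ∃ l, j ∈ T l := ⟨i, hj⟩
  have hi : h.choose = i := by
    by_contra hne
    exact disjoint_left.1 (hdisj _ _ hne) h.choose_spec hj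
  rw [varEdge, dif_neg ht, dif_pos h, hi]

theorem varEdge_of_forall {j : Fin m} (h₁ : ∀ i, t i ≠ j) (h₂ : ∀ i, j ∉ T i) :
    varEdge T t j = (Fin.last n, Fin.last n) := by
  rw [varEdge, dif_neg (by push Not; exact h₁), dif_neg (by push Not; exact h₂)]

theorem eq_of_varEdge_eq {i : Fin n} {j : Fin m} (h : varEdge T t j = (i.castSucc, i.succ)) :
    t i = j := by
  unfold varEdge at h
  split_ifs at h with h₁
  · rw [Prod.mk.injEq, Fin.castSucc_inj] at h
    exact h.1 ▸ h₁.choose_spec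
  all_goals simp [Prod.ext_iff, Fin.ext_iff] at h; omega

theorem mem_of_varEdge_eq {i : Fin n} {j : Fin m} (h : varEdge T t j = (i.castSucc, i.castSucc)) :
    j ∈ T i := by
  unfold varEdge at h
  split_ifs at h with h₁ h₂
  · simp [Prod.ext_iff, Fin.ext_iff] at h; omega
  · rw [Prod.mk.injEq, Fin.castSucc_inj] at h
    exact h.1 ▸ h₂.choose_spec
  · simp [Prod.ext_iff, Fin.ext_iff] at h; omega

end Edges

namespace InSPerm

variable {m n : ℕ} {T : Fin n → Finset (Fin m)} {t : Fin n → Fin m} {σ : Equiv.Perm (Fin m)}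

theorem apply_mem (hσ : InSPerm T t σ) {i : Fin n} {p : Fin m} (h₁ : blockStart T i ≤ p)
    (h₂ : p < blockEnd T i) : σ p ∈ T i :=
  (hσ i).1 ▸ mem_image_of_mem σ (by simpa [blockEnd] using ⟨h₁, h₂⟩)

theorem lt_blockEnd_of_apply_mem (hσ : InSPerm T t σ) {i : Fin n} {p : Fin m}
    (h : σ p ∈ T i) : (p : ℕ) < blockEnd T i := by
  rw [← (hσ i).1] at h
  obtain ⟨q, hq, hqp⟩ := mem_image.1 h
  rw [σ.injective hqp] at hq
  simpa [blockEnd] using (mem_filter.1 hq).2.2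

theorem varEdge_apply (hTt : Admissible T t) (hσ : InSPerm T t σ) (p : Fin m) :
    varEdge T t (σ p) =
      (⟨blockRank T p, blockRank_lt_succ T p⟩,
        ⟨blockRank T (p + 1), blockRank_lt_succ T _⟩) := by
  rcases exists_blockStart_le_le_blockEnd T p with hp | ⟨i, h₁, h₂⟩
  · have hp' : ∀ l, blockEnd T l < p + 1 := fun l => (hp l).trans (Nat.lt_succ_self _)
    rw [varEdge_of_forall (fun i hi => ?_) (fun i hi => ?_)]
    · simp [Prod.ext_iff, Fin.ext_iff, blockRank_eq_of_forall_lt T hp,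
        blockRank_eq_of_forall_lt T hp']
    · have hend := (hσ i).2 ⟨blockEnd T i, hTt.blockEnd_lt i⟩ rfl
      rw [hi, σ.injective.eq_iff, Fin.ext_iff] at hend
      exact (hp i).ne hend
    · exact (hp i).not_gt (hσ.lt_blockEnd_of_apply_mem hi)
  · rcases h₂.lt_or_eq with h₂ | h₂
    · rw [varEdge_of_mem hTt (hσ.apply_mem h₁ h₂)]
      simp [Prod.ext_iff, Fin.ext_iff, blockRank_eq_of_le_of_le T h₁ h₂.le,
        blockRank_eq_of_le_of_le T (h₁.trans (Nat.le_succ _)) h₂]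
    · rw [(hσ i).2 p h₂, varEdge_apply_self hTt.1.injective]
      have hrank := blockRank_eq_of_le_of_le T h₁ h₂.le
      rw [h₂] at hrank ⊢
      simp [Prod.ext_iff, Fin.ext_iff, hrank, blockRank_blockEnd_add_one]

theorem isPath (hTt : Admissible T t) (hσ : InSPerm T t σ) :
    IsEdgePath (varEdge T t ∘ σ) 0 (Fin.last n) := by
  -- before position `q` the path has crossed the edge of `t i` for each block ending before `q`
  refine ⟨fun q => ⟨blockRank T q, blockRank_lt_succ T q⟩, ?_, ?_, hσ.varEdge_apply hTt⟩
  · ext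
    simp [blockRank]
  · ext
    simpa using blockRank_eq_of_forall_lt T hTt.blockEnd_lt

theorem of_varEdge_comp_eq {σ₀ : Equiv.Perm (Fin m)} (hTt : Admissible T t)
    (hσ₀ : InSPerm T t σ₀) (h : varEdge T t ∘ σ = varEdge T t ∘ σ₀) :
    InSPerm T t σ := by
  intro i
  refine ⟨eq_of_subset_of_card_le (fun j hj => ?_) ?_, fun p hp => ?_⟩
  · obtain ⟨p, hp, rfl⟩ := mem_image.1 hj
    apply mem_of_varEdge_eq
    rw [← Function.comp_apply (f := varEdge T t), h, Function.comp_apply,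
      varEdge_of_mem hTt ((hσ₀ i).1 ▸ mem_image_of_mem σ₀ hp)]
  · rw [card_image_of_injective _ σ.injective]
    conv_lhs => rw [← (hσ₀ i).1]
    rw [card_image_of_injective _ σ₀.injective]
  · refine (eq_of_varEdge_eq (T := T) ?_).symm
    rw [← Function.comp_apply (f := varEdge T t), h, Function.comp_apply, (hσ₀ i).2 p hp,
      varEdge_apply_self hTt.1.injective]

end InSPerm

theorem isPath_varEdge_comp_iff {m n : ℕ} {T : Fin n → Finset (Fin m)} {t : Fin n → Fin m}
    {σ σ₀ : Equiv.Perm (Fin m)} (hTt : Admissible T t) (hσ₀ : InSPerm T t σ₀) :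
    IsEdgePath (varEdge T t ∘ σ) 0 (Fin.last n) ↔ InSPerm T t σ := by
  refine ⟨fun h => hσ₀.of_varEdge_comp_eq hTt (Tuple.unique_monotone ?_ ?_), (·.isPath hTt)⟩
  · exact h.monotone fun _ => varEdge_fst_le_snd T t _
  · exact (hσ₀.isPath hTt).monotone fun _ => varEdge_fst_le_snd T t _

theorem isUT_single {K : Type*} [Field K] {n : ℕ} {a b : Fin n} (hab : a ≤ b) (c : K) :
    IsUT (Matrix.single a b c) := fun i j hji =>
  Matrix.single_apply_of_ne a b c i j (by rintro ⟨rfl, rfl⟩; exact hab.not_gt hji)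

theorem mEval_single_varEdge_apply {K : Type*} [Field K] {m n : ℕ} (α : Equiv.Perm (Fin m) → K)
    {T : Fin n → Finset (Fin m)} {t : Fin n → Fin m} {σ₀ : Equiv.Perm (Fin m)}
    (hTt : Admissible T t) (hσ₀ : InSPerm T t σ₀) :
    mEval α (fun j => Matrix.single (varEdge T t j).1 (varEdge T t j).2 (1 : K)) 0 (Fin.last n) =
      mlBeta α T t := by
  rw [mEval, mlBeta, Matrix.sum_apply, sum_filter]
  refine sum_congr rfl fun σ _ => ?_
  have hprod := Matrix.list_prod_ofFn_single_apply (R := K) (varEdge T t ∘ σ) 0 (Fin.last n)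
  simp only [Function.comp_apply] at hprod
  rw [Matrix.smul_apply, hprod]
  by_cases hσ : InSPerm T t σ
  · rw [if_pos ((isPath_varEdge_comp_iff hTt hσ₀).2 hσ), if_pos hσ, smul_eq_mul, mul_one]
  · rw [if_neg (mt (isPath_varEdge_comp_iff hTt hσ₀).1 hσ), if_neg hσ, smul_zero]

theorem not_identity_of_beta_ne_zero_general {K : Type*} [Field K]
    (n m : ℕ) (α : Equiv.Perm (Fin m) → K)
    (h : ∃ (T : Fin n → Finset (Fin m)) (t : Fin n → Fin m),
        Admissible T t ∧ mlBeta α T t ≠ 0) :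
    ¬ ∀ a : Fin m → Matrix (Fin (n + 1)) (Fin (n + 1)) K,
        (∀ l, IsUT (a l)) → mEval α a = 0 := by
  classical
  intro hPI
  obtain ⟨T, t, hTt, hβ⟩ := h
  obtain ⟨σ₀, hσ₀, -⟩ := exists_ne_zero_of_sum_ne_zero hβ
  apply hβ
  rw [← mEval_single_varEdge_apply α hTt (mem_filter.1 hσ₀).2,
    hPI _ fun j => isUT_single (varEdge_fst_le_snd T t j) 1, Matrix.zero_apply]

/-- If `β^{(n,T,t)} ≠ 0` for some admissible data `(T, t)` with `k = n`, then the
multilinear polynomial is not a polynomial identity of `UT_{n+1}(K)`. -/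
theorem not_identity_of_beta_ne_zero {K : Type*} [Field K] [Infinite K]
    (n m : ℕ) (hn : 1 ≤ n) (hm : 1 ≤ m) (α : Equiv.Perm (Fin m) → K)
    (h : ∃ (T : Fin n → Finset (Fin m)) (t : Fin n → Fin m),
        Admissible T t ∧ mlBeta α T t ≠ 0) :
    ¬ ∀ a : Fin m → Matrix (Fin (n + 1)) (Fin (n + 1)) K,
        (∀ l, IsUT (a l)) → mEval α a = 0 :=
  not_identity_of_beta_ne_zero_general n m α h
end

section
/- Let K be a field and r ≥ 1. The standard polynomial St_{2r} of degree 2r is a polynomial identity of UT_r(K) but is not a polynomial identity of UT_{r+1}(K). -/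
/-- Evaluation of the standard polynomial `St_m = ∑ σ, sgn(σ) x_{σ(1)} ⋯ x_{σ(m)}`
at the tuple `a` of elements of the `K`-algebra `A`. -/
noncomputable def stdEval {K A : Type*} [Field K] [Ring A] [Algebra K A]
    (m : ℕ) (a : Fin m → A) : A :=
  ∑ σ : Equiv.Perm (Fin m), ((Equiv.Perm.sign σ : ℤ) : K) • (List.ofFn fun i => a (σ i)).prod

/-!
Expanding the entries of a product of matrices as sums over index paths, the `(i, j)` entry of
`St_m(a_1, …, a_m)` becomes the sum, over paths `p` from `i` to `j` with `m` steps, of the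
determinant of the `m × m` matrix whose `(l, k)` entry is the entry of `a_l` at the `k`-th step of
`p`. For upper triangular `a_l` only monotone paths contribute, and a monotone path in `Fin n`
with at least `2n` steps takes the same step twice, giving two equal columns. In `UT_{r+1}(K)`,
for the matrix units `E₁₁, E₁₂, E₂₂, …, E_{r,r+1}` the only path from `1` to `r + 1` with a
nonzero determinant is the staircase through them, whose matrix is the identity; so the
`(1, r + 1)` entry of `St_{2r}` at these units is `1`.
-/

open Finset

theorem Matrix.list_ofFn_prod_apply {ι R : Type*} [Fintype ι] [DecidableEq ι] [CommSemiring R]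
    {m : ℕ} (M : Fin m → Matrix ι ι R) (i j : ι) :
    (List.ofFn M).prod i j =
      ∑ p : Fin (m + 1) → ι with p 0 = i ∧ p (Fin.last m) = j,
        ∏ k, M k (p k.castSucc) (p k.succ) := by
  induction m generalizing i with
  | zero =>
    rw [List.ofFn_zero, List.prod_nil, Matrix.one_apply, sum_filter,
      ← (Equiv.funUnique (Fin 1) ι).symm.sum_comp]
    by_cases h : i = j <;> simp [Fin.last, h, filter_false_of_mem]
  | succ m ih =>
    have split_first_step :
        ∑ p : Fin (m + 2) → ι with p 0 = i ∧ p (Fin.last (m + 1)) = j,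
          ∏ k, M k (p k.castSucc) (p k.succ) =
        ∑ q : Fin (m + 1) → ι with q (Fin.last m) = j,
          M 0 i (q 0) * ∏ k : Fin m, M k.succ (q k.castSucc) (q k.succ) := by
      refine sum_nbij' Fin.tail (fun q => Fin.cons i q) ?_ ?_ ?_ ?_ ?_
      · intro p hp
        simp only [mem_filter, mem_univ, true_and] at hp ⊢
        simpa [Fin.tail] using hp.2
      · intro q hq
        simp only [mem_filter, mem_univ, true_and] at hq ⊢
        simpa using hq
      · intro p hp
        simp only [mem_filter, mem_univ, true_and] at hp
        simp [← hp.1]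
      · intro q _
        simp
      · intro p hp
        simp only [mem_filter, mem_univ, true_and] at hp
        rw [Fin.prod_univ_succ]
        simp [Fin.tail, hp.1]
    rw [split_first_step, List.ofFn_succ, List.prod_cons, Matrix.mul_apply]
    simp_rw [ih, mul_sum]
    rw [← sum_fiberwise _ (fun q : Fin (m + 1) → ι => q 0)]
    refine sum_congr rfl fun x _ => ?_
    rw [filter_filter]
    refine sum_congr (by ext; simp [and_comm]) fun q hq => ?_
    simp only [mem_filter] at hq
    rw [hq.2.2]

def pathMatrix {ι R : Type*} {m : ℕ} (a : Fin m → Matrix ι ι R) (p : Fin (m + 1) → ι) :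
    Matrix (Fin m) (Fin m) R :=
  Matrix.of fun l k => a l (p k.castSucc) (p k.succ)

section

variable {K : Type*} [Field K]

theorem stdEval_apply {ι : Type*} [Fintype ι] [DecidableEq ι] {m : ℕ}
    (a : Fin m → Matrix ι ι K) (i j : ι) :
    stdEval (K := K) m a i j =
      ∑ p : Fin (m + 1) → ι with p 0 = i ∧ p (Fin.last m) = j, (pathMatrix a p).det := by
  simp only [stdEval, Matrix.sum_apply, Matrix.smul_apply, smul_eq_mul,
    Matrix.list_ofFn_prod_apply, mul_sum]
  rw [sum_comm]
  refine sum_congr rfl fun p _ => ?_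
  rw [Matrix.det_apply']
  rfl

/-- The sums `p k + p (k + 1)` of a monotone path take only `2n - 1` values, and two steps with
the same sum `p k + p (k + 1) = p l + p (l + 1)`, `k < l`, force `p k = ⋯ = p (l + 1)`. -/
theorem exists_ne_step_eq_of_monotone {n m : ℕ} (hm : 2 * n ≤ m) {p : Fin (m + 1) → Fin n}
    (hp : Monotone p) :
    ∃ k l : Fin m, k ≠ l ∧ p k.castSucc = p l.castSucc ∧ p k.succ = p l.succ := by
  have hn : 0 < n := (p 0).pos
  obtain ⟨k, -, l, -, hkl, hsum⟩ :=
    exists_ne_map_eq_of_card_lt_of_maps_to (s := univ) (t := range (2 * n - 1))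
      (f := fun k : Fin m => (p k.castSucc : ℕ) + p k.succ)
      (by rw [card_range, card_univ, Fintype.card_fin]; omega)
      (fun k _ => by simp only [coe_range, Set.mem_Iio]; omega)
  wlog hlt : k < l generalizing k l
  · obtain ⟨l', k', hne, h₁, h₂⟩ := this l k hkl.symm hsum.symm (by omega)
    exact ⟨k', l', hne.symm, h₁.symm, h₂.symm⟩
  have h₁ : p k.castSucc ≤ p k.succ := hp k.castSucc_le_succ
  have h₂ : p k.succ ≤ p l.castSucc := hp (Fin.succ_le_castSucc_iff.2 hlt)
  have h₃ : p l.castSucc ≤ p l.succ := hp l.castSucc_le_succ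
  simp only [Fin.le_def] at h₁ h₂ h₃
  exact ⟨k, l, hkl, Fin.ext (by omega), Fin.ext (by omega)⟩

theorem det_pathMatrix_eq_zero_of_isUT {n m : ℕ} (hm : 2 * n ≤ m)
    {a : Fin m → Matrix (Fin n) (Fin n) K} (ha : ∀ l, IsUT (a l)) (p : Fin (m + 1) → Fin n) :
    (pathMatrix a p).det = 0 := by
  by_cases hp : Monotone p
  · obtain ⟨k, l, hkl, hcs, hs⟩ := exists_ne_step_eq_of_monotone hm hp
    exact Matrix.det_zero_of_column_eq hkl fun l' => by simp [pathMatrix, hcs, hs]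
  · obtain ⟨k, hk⟩ : ∃ k : Fin m, p k.succ < p k.castSucc := by
      simpa [Fin.monotone_iff_le_succ] using hp
    exact Matrix.det_eq_zero_of_column_eq_zero k fun l => ha l _ _ hk

theorem stdEval_eq_zero_of_isUT {n m : ℕ} (hm : 2 * n ≤ m)
    {a : Fin m → Matrix (Fin n) (Fin n) K} (ha : ∀ l, IsUT (a l)) : stdEval (K := K) m a = 0 := by
  ext i j
  rw [stdEval_apply, Matrix.zero_apply]
  exact sum_eq_zero fun p _ => det_pathMatrix_eq_zero_of_isUT hm ha p

end

def staircase (r : ℕ) : Fin (2 * r + 1) → Fin (r + 1) :=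
  fun t => ⟨t / 2, by omega⟩

@[simp]
theorem staircase_zero (r : ℕ) : staircase r 0 = 0 :=
  Fin.ext (Nat.zero_div 2)

@[simp]
theorem staircase_last (r : ℕ) : staircase r (Fin.last (2 * r)) = Fin.last r := by
  ext
  simp [staircase]

theorem staircase_monotone (r : ℕ) : Monotone (staircase r) :=
  fun _ _ h => Fin.le_def.2 (Nat.div_le_div_right (Fin.le_def.1 h))

/-- The matrix units `E₁₁, E₁₂, E₂₂, …, E_{r,r}, E_{r,r+1}` of the steps of the staircase. -/
def staircaseUnits (K : Type*) [Field K] (r : ℕ) :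
    Fin (2 * r) → Matrix (Fin (r + 1)) (Fin (r + 1)) K :=
  fun l => Matrix.single (staircase r l.castSucc) (staircase r l.succ) 1

section

variable {K : Type*} [Field K] (r : ℕ)

theorem isUT_staircaseUnits (l : Fin (2 * r)) : IsUT (staircaseUnits K r l) := by
  intro i j hji
  refine Matrix.single_apply_of_ne _ _ _ _ _ fun ⟨hi, hj⟩ => ?_
  subst hi hj
  exact absurd (staircase_monotone r l.castSucc_le_succ) (not_le.2 hji)

theorem pathMatrix_staircaseUnits_staircase :
    pathMatrix (staircaseUnits K r) (staircase r) = 1 := by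
  ext l k
  simp only [pathMatrix, staircaseUnits, Matrix.of_apply, Matrix.single_apply, Matrix.one_apply]
  congr 1
  simp only [staircase, Fin.val_castSucc, Fin.val_succ, Fin.ext_iff, eq_iff_iff]
  omega

theorem eq_staircase_of_det_pathMatrix_ne_zero {p : Fin (2 * r + 1) → Fin (r + 1)}
    (hlast : p (Fin.last (2 * r)) = Fin.last r)
    (hp : (pathMatrix (staircaseUnits K r) p).det ≠ 0) : p = staircase r := by
  rw [Matrix.det_apply'] at hp
  obtain ⟨σ, -, hσ⟩ := exists_ne_zero_of_sum_ne_zero hp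
  have hstep (k : Fin (2 * r)) :
      p k.castSucc = staircase r (σ k).castSucc ∧ p k.succ = staircase r (σ k).succ := by
    by_contra h
    exact prod_ne_zero_iff.1 (right_ne_zero_of_mul hσ) k (mem_univ k)
      (Matrix.single_apply_of_ne _ _ _ _ _ fun h' => h ⟨h'.1.symm, h'.2.symm⟩)
  have hp_mono : Monotone p := Fin.monotone_iff_le_succ.2 fun k => by
    rw [(hstep k).1, (hstep k).2]
    exact staircase_monotone r (σ k).castSucc_le_succ
  -- `σ k` is recovered from the `k`-th step as `⌊σ k / 2⌋ + ⌊(σ k + 1) / 2⌋`.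
  have hσ_val (k : Fin (2 * r)) : (σ k : ℕ) = p k.castSucc + p k.succ := by
    simp only [hstep k, staircase, Fin.val_castSucc, Fin.val_succ]
    omega
  have hσ_mono : Monotone σ := fun k l hkl => by
    have h₁ := hp_mono (Fin.castSucc_le_castSucc_iff.2 hkl)
    have h₂ := hp_mono (Fin.succ_le_succ_iff.2 hkl)
    rw [Fin.le_def] at h₁ h₂ ⊢
    rw [hσ_val, hσ_val]
    omega
  have hσ_one : ∀ k, σ k = k := fun k => (hσ_mono.strictMono_of_injective σ.injective).apply_eq
  funext t
  induction t using Fin.lastCases with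
  | last => exact hlast.trans (staircase_last r).symm
  | cast k => simpa [hσ_one] using (hstep k).1

theorem stdEval_staircaseUnits_apply :
    stdEval (K := K) (2 * r) (staircaseUnits K r) 0 (Fin.last r) = 1 := by
  rw [stdEval_apply, sum_eq_single (staircase r)]
  · rw [pathMatrix_staircaseUnits_staircase, Matrix.det_one]
  · intro p hp hne
    by_contra h
    exact hne (eq_staircase_of_det_pathMatrix_ne_zero r (mem_filter.1 hp).2.2 h)
  · simp

theorem stdEval_staircaseUnits_ne_zero : stdEval (K := K) (2 * r) (staircaseUnits K r) ≠ 0 :=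
  fun h => by simpa [h] using stdEval_staircaseUnits_apply (K := K) r

end

theorem standard_poly_even_identity_UT_general {K : Type*} [Field K] (r : ℕ) :
    (∀ a : Fin (2 * r) → Matrix (Fin r) (Fin r) K,
        (∀ l, IsUT (a l)) → stdEval (K := K) (2 * r) a = 0) ∧
      ¬ ∀ a : Fin (2 * r) → Matrix (Fin (r + 1)) (Fin (r + 1)) K,
          (∀ l, IsUT (a l)) → stdEval (K := K) (2 * r) a = 0 :=
  ⟨fun _ => stdEval_eq_zero_of_isUT le_rfl,
    fun h => stdEval_staircaseUnits_ne_zero r (h _ (isUT_staircaseUnits r))⟩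

/-- The standard polynomial `St_{2r}` is a polynomial identity of `UT_r(K)` but not of
`UT_{r+1}(K)`. -/
theorem standard_poly_even_identity_UT {K : Type*} [Field K] (r : ℕ) (hr : 1 ≤ r) :
    (∀ a : Fin (2 * r) → Matrix (Fin r) (Fin r) K,
        (∀ l, IsUT (a l)) → stdEval (K := K) (2 * r) a = 0) ∧
      ¬ ∀ a : Fin (2 * r) → Matrix (Fin (r + 1)) (Fin (r + 1)) K,
          (∀ l, IsUT (a l)) → stdEval (K := K) (2 * r) a = 0 :=
  standard_poly_even_identity_UT_general r
end

section
/- Let K be a field of characteristic zero, let n ≥ 1 and 1 ≤ r ≤ n, and let f be a polynomial in the free associative algebra K⟨X⟩ (X a countably infinite set of variables). Then every evaluation of f at elements of UT_n(K) lies in J^r if and only if f is a polynomial identity of UT_r(K). -/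
section Aux

variable {K : Type*} [Field K]

/-- The `r × r` window at offset `t` of an `n × n` matrix. -/
def wmap {n : ℕ} (r t : ℕ) (ht : t + r ≤ n) (M : Matrix (Fin n) (Fin n) K) :
    Matrix (Fin r) (Fin r) K :=
  fun p q => M ⟨t + p, by omega⟩ ⟨t + q, by omega⟩

lemma isUT_mul {n : ℕ} {M N : Matrix (Fin n) (Fin n) K} (hM : IsUT M) (hN : IsUT N) :
    IsUT (M * N) := by
  intro i j hij
  rw [Matrix.mul_apply]
  apply Finset.sum_eq_zero
  intro k _
  rcases lt_or_ge (k : ℕ) (i : ℕ) with h | h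
  · rw [hM i k h, zero_mul]
  · rw [hN k j (by omega), mul_zero]

lemma isUT_algebraMap {n : ℕ} (c : K) : IsUT (algebraMap K (Matrix (Fin n) (Fin n) K) c) := by
  intro i j hij
  rw [Matrix.algebraMap_matrix_apply, if_neg]
  rintro rfl
  omega

lemma isUT_add {n : ℕ} {M N : Matrix (Fin n) (Fin n) K} (hM : IsUT M) (hN : IsUT N) :
    IsUT (M + N) := by
  intro i j hij
  rw [Matrix.add_apply, hM i j hij, hN i j hij, add_zero]

lemma wmap_isUT {n r t : ℕ} (ht : t + r ≤ n) {M : Matrix (Fin n) (Fin n) K} (hM : IsUT M) :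
    IsUT (wmap r t ht M) := by
  intro p q hpq
  exact hM ⟨t + p, by omega⟩ ⟨t + q, by omega⟩ (by simpa using by omega)

lemma wmap_algebraMap {n r t : ℕ} (ht : t + r ≤ n) (c : K) :
    wmap r t ht (algebraMap K (Matrix (Fin n) (Fin n) K) c)
      = algebraMap K (Matrix (Fin r) (Fin r) K) c := by
  funext p q
  simp only [wmap, Matrix.algebraMap_matrix_apply]
  by_cases h : p = q
  · subst h; rw [if_pos rfl, if_pos rfl]
  · rw [if_neg, if_neg h]
    intro hc
    apply h
    have := congrArg Fin.val hc
    simp only [] at this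
    exact Fin.ext (by omega)

lemma wmap_add {n r t : ℕ} (ht : t + r ≤ n) (M N : Matrix (Fin n) (Fin n) K) :
    wmap r t ht (M + N) = wmap r t ht M + wmap r t ht N := by
  funext p q
  simp [wmap]

lemma wmap_mul {n r t : ℕ} (ht : t + r ≤ n) {M N : Matrix (Fin n) (Fin n) K}
    (hM : IsUT M) (hN : IsUT N) :
    wmap r t ht (M * N) = wmap r t ht M * wmap r t ht N := by
  funext p q
  simp only [wmap, Matrix.mul_apply]
  set e : Fin r ↪ Fin n :=
    ⟨fun s => ⟨t + s, by omega⟩, by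
      intro a b hab
      have := congrArg Fin.val hab
      simp only [] at this
      exact Fin.ext (by omega)⟩ with he
  rw [← Finset.sum_subset (Finset.subset_univ (Finset.univ.map e))]
  · rw [Finset.sum_map]
    rfl
  · intro k _ hk
    have hmem : ∀ s : Fin r, (⟨t + s, by omega⟩ : Fin n) ≠ k := by
      intro s hs
      exact hk (Finset.mem_map.2 ⟨s, Finset.mem_univ s, hs⟩)
    rcases lt_or_ge (k : ℕ) t with h | h
    · rw [hM ⟨t + p, by omega⟩ k (by simpa using by omega), zero_mul]
    · rcases lt_or_ge (k : ℕ) (t + r) with h2 | h2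
      · exact absurd (Fin.ext (show t + ((k : ℕ) - t) = (k : ℕ) by omega))
          (hmem ⟨k - t, by omega⟩)
      · rw [hN k ⟨t + q, by omega⟩ (by simpa using by omega), mul_zero]

lemma key {n r t : ℕ} (ht : t + r ≤ n) (f : FreeAlgebra K ℕ)
    (a : ℕ → Matrix (Fin n) (Fin n) K) (ha : ∀ l, IsUT (a l)) :
    IsUT ((FreeAlgebra.lift K a) f) ∧
      wmap r t ht ((FreeAlgebra.lift K a) f)
        = (FreeAlgebra.lift K (fun l => wmap r t ht (a l))) f := by
  induction f using FreeAlgebra.induction with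
  | grade0 c =>
      refine ⟨by simpa using isUT_algebraMap c, ?_⟩
      simp [wmap_algebraMap]
  | grade1 l =>
      refine ⟨by simpa using ha l, ?_⟩
      simp
  | mul f g ihf ihg =>
      refine ⟨by simpa using isUT_mul ihf.1 ihg.1, ?_⟩
      simp only [map_mul]
      rw [wmap_mul ht ihf.1 ihg.1, ihf.2, ihg.2]
  | add f g ihf ihg =>
      refine ⟨by simpa using isUT_add ihf.1 ihg.1, ?_⟩
      simp only [map_add]
      rw [wmap_add, ihf.2, ihg.2]

end Aux

/-- Over a field of characteristic zero, every evaluation of `f ∈ K⟨X⟩` on `UT_n(K)` lies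
in `J^r` if and only if `f` is a polynomial identity of `UT_r(K)` (`1 ≤ r ≤ n`). -/
theorem eval_mem_pow_jacobson_iff_identity {K : Type*} [Field K] [CharZero K]
    (n r : ℕ) (hn : 1 ≤ n) (hr : 1 ≤ r) (hrn : r ≤ n) (f : FreeAlgebra K ℕ) :
    (∀ a : ℕ → Matrix (Fin n) (Fin n) K, (∀ l, IsUT (a l)) →
        InJpow r (FreeAlgebra.lift K a f))
      ↔ ∀ a : ℕ → Matrix (Fin r) (Fin r) K, (∀ l, IsUT (a l)) →
          FreeAlgebra.lift K a f = 0 := by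
  have ht0 : 0 + r ≤ n := by omega
  constructor
  · intro H a ha
    set b : ℕ → Matrix (Fin n) (Fin n) K := fun l i j =>
      if h : (i : ℕ) < r ∧ (j : ℕ) < r then a l ⟨i, h.1⟩ ⟨j, h.2⟩ else 0 with hbdef
    have hb : ∀ l, IsUT (b l) := by
      intro l i j hij
      simp only [hbdef]
      split
      · exact ha l _ _ (by simpa using hij)
      · rfl
    have hwb : (fun l => wmap r 0 ht0 (b l)) = a := by
      funext l p q
      simp only [wmap, hbdef]
      rw [dif_pos ⟨by omega, by omega⟩]
      congr 1 <;> exact Fin.ext (by simp)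
    have hkey := (key ht0 f b hb).2
    rw [hwb] at hkey
    have hJ := H b hb
    funext p q
    rw [← hkey]
    show (FreeAlgebra.lift K b f) ⟨0 + p, _⟩ ⟨0 + q, _⟩ = 0
    exact hJ _ _ (by simpa using by omega)
  · intro h a ha i j hij
    rcases lt_or_ge (j : ℕ) (i : ℕ) with hji | hij'
    · exact (key ht0 f a ha).1 i j hji
    · set t := min (i : ℕ) (n - r) with htdef
      have hinlt : (i : ℕ) < n := i.isLt
      have hjnlt : (j : ℕ) < n := j.isLt
      have ht : t + r ≤ n := by omega
      obtain ⟨hut, heq⟩ := key ht f a ha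
      have hwUT : ∀ l, IsUT (wmap r t ht (a l)) := fun l => wmap_isUT ht (ha l)
      rw [h _ hwUT] at heq
      have hp : (i : ℕ) - t < r := by omega
      have hq : (j : ℕ) - t < r := by omega
      have hentry := congrFun (congrFun heq ⟨(i : ℕ) - t, hp⟩) ⟨(j : ℕ) - t, hq⟩
      have hii : (⟨t + ((i : ℕ) - t), by omega⟩ : Fin n) = i :=
        Fin.ext (show t + ((i : ℕ) - t) = (i : ℕ) by omega)
      have hjj : (⟨t + ((j : ℕ) - t), by omega⟩ : Fin n) = j :=
        Fin.ext (show t + ((j : ℕ) - t) = (j : ℕ) by omega)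
      rw [← hii, ← hjj]
      simpa [wmap] using hentry
end

section
/- Let K be a field of characteristic zero and n ≥ 1. If f ∈ K⟨X⟩ is a traceless polynomial of M_n(K), i.e., every evaluation of f at elements of M_n(K) has trace zero, then f is cyclically equivalent to a polynomial identity of M_n(K); that is, there exists g ∈ K⟨X⟩ which is a polynomial identity of M_n(K) such that f − g is a sum of commutators [u, v] = uv − vu with u, v ∈ K⟨X⟩. -/
/-!
Scaling every variable by `t` shows that each homogeneous component of a traceless `f` is
traceless, hence so is `f' = ∑_w (c_w / |w|) w`. Substituting `x_i ↦ (1 + t b) x_i` in `f'` and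
taking the coefficient of `t`, cyclicity of the trace gives `tr (b · R f') = 0` for every matrix
`b`, where `R` sends a word to the sum of its cyclic rotations; so `R f'` is an identity of
`M_n(K)`. Each rotation of `w` differs from `w` by a commutator, so `R f'` is cyclically
equivalent to `∑_w c_w w = f - c`, and the constant term `c` vanishes because `tr (c · 1) = n c`.
-/
open Polynomial

namespace Polynomial

variable {K B : Type*} [Field K] [Ring B] [Algebra K B]

variable (K) in
noncomputable def evalScalar (t : K) : B[X] →ₐ[K] B :=
  eval₂AlgHom (AlgHom.id K B) (algebraMap K B t) fun x =>
    Algebra.commute_algebraMap_right t (AlgHom.id K B x)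

theorem evalScalar_apply (t : K) (p : B[X]) :
    evalScalar K t p = p.sum fun k x => t ^ k • x := by
  simp only [evalScalar, eval₂AlgHom_apply, eval₂_eq_sum, ← map_pow, ← Algebra.commutes,
    ← Algebra.smul_def]
  rfl

theorem map_coeff_eq_zero_of_forall_evalScalar [Infinite K] (τ : B →ₗ[K] K) (p : B[X])
    (h : ∀ t : K, τ (evalScalar K t p) = 0) (k : ℕ) : τ (p.coeff k) = 0 := by
  set q : K[X] := lsum (fun j => monomial j ∘ₗ τ) p
  have hq_eval (t : K) : q.eval t = τ (evalScalar K t p) := by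
    simp [q, evalScalar_apply, Polynomial.sum_def, eval_finsetSum, mul_comm]
  have hq_coeff : q.coeff k = τ (p.coeff k) := by
    simp only [q, lsum_apply, Polynomial.sum_def, finsetSum_coeff, LinearMap.comp_apply,
      coeff_monomial, Finset.sum_ite_eq']
    split_ifs with hk
    · rfl
    · rw [notMem_support_iff.mp hk, map_zero]
  have hq : q = 0 := Polynomial.funext fun t => by simp [hq_eval, h]
  rw [← hq_coeff, hq, coeff_zero]

theorem coeff_zero_prod_C_add_X_mul_C (b : B) (l : List B) :
    ((l.map fun x => C x + X * C (b * x)).prod).coeff 0 = l.prod := by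
  induction l with
  | nil => simp
  | cons x l ih => rw [List.map_cons, List.prod_cons, mul_coeff_zero, ih]; simp

theorem coeff_one_prod_C_add_X_mul_C (b : B) (l : List B) :
    ((l.map fun x => C x + X * C (b * x)).prod).coeff 1 =
      ∑ p ∈ Finset.range l.length, (l.take p).prod * b * (l.drop p).prod := by
  induction l with
  | nil => simp [coeff_one]
  | cons x l ih =>
    rw [List.map_cons, List.prod_cons, add_mul, coeff_add, coeff_C_mul, mul_assoc, coeff_X_mul,
      coeff_C_mul, coeff_zero_prod_C_add_X_mul_C, ih, List.length_cons, Finset.sum_range_succ']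
    simp [Finset.mul_sum, mul_assoc]

end Polynomial

theorem FreeMonoid.lift_monomial_one {σ B : Type*} [Ring B] (a : σ → B) (w : FreeMonoid σ) :
    FreeMonoid.lift (fun i => monomial 1 (a i)) w = monomial w.length (FreeMonoid.lift a w) := by
  induction w using FreeMonoid.inductionOn' with
  | one => simp
  | of_mul x w ih => simp [ih, monomial_mul_monomial, add_comm]

namespace FreeAlgebra

section Words

variable {R σ A B : Type*} [CommRing R] [Ring A] [Algebra R A] [Ring B] [Algebra R B]

theorem basisFreeMonoid_eq_lift (w : FreeMonoid σ) :
    basisFreeMonoid R σ w = FreeMonoid.lift (ι R) w := by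
  simp [basisFreeMonoid, equivMonoidAlgebraFreeMonoid]

theorem basisFreeMonoid_mul (v w : FreeMonoid σ) :
    basisFreeMonoid R σ (v * w) = basisFreeMonoid R σ v * basisFreeMonoid R σ w := by
  simp only [basisFreeMonoid_eq_lift, map_mul]

theorem lift_basisFreeMonoid (a : σ → A) (w : FreeMonoid σ) :
    lift R a (basisFreeMonoid R σ w) = FreeMonoid.lift a w := by
  rw [basisFreeMonoid_eq_lift, ← MonoidHom.coe_coe, ← MonoidHom.comp_apply, FreeMonoid.comp_lift]
  simp

theorem map_lift (φ : A →ₐ[R] B) (a : σ → A) (x : FreeAlgebra R σ) :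
    φ (lift R a x) = lift R (φ ∘ a) x := by
  rw [← AlgHom.comp_apply, ← lift_comp_ι (φ.comp (lift R a))]
  simp [Function.comp_def]

end Words

section Operators

variable {R σ : Type*} [CommRing R]

noncomputable def degreeScale (φ : ℕ → R) : FreeAlgebra R σ →ₗ[R] FreeAlgebra R σ :=
  (basisFreeMonoid R σ).constr R fun w => φ w.length • basisFreeMonoid R σ w

noncomputable def rotationSum : FreeAlgebra R σ →ₗ[R] FreeAlgebra R σ :=
  (basisFreeMonoid R σ).constr R fun w =>
    ∑ p ∈ Finset.range w.length, basisFreeMonoid R σ (.ofList (w.toList.rotate p))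

theorem degreeScale_basisFreeMonoid (φ : ℕ → R) (w : FreeMonoid σ) :
    degreeScale φ (basisFreeMonoid R σ w) = φ w.length • basisFreeMonoid R σ w :=
  (basisFreeMonoid R σ).constr_basis R _ w

theorem rotationSum_basisFreeMonoid (w : FreeMonoid σ) :
    rotationSum (basisFreeMonoid R σ w) =
      ∑ p ∈ Finset.range w.length, basisFreeMonoid R σ (.ofList (w.toList.rotate p)) :=
  (basisFreeMonoid R σ).constr_basis R _ w

end Operators

section Commutators

variable (R A : Type*) [CommRing R] [Ring A] [Algebra R A]

/-- Given by list sums rather than as a span, so that membership is literally the form of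
cyclic equivalence in the main theorem. -/
def commutatorSums : Submodule R A where
  carrier := {x | ∃ l : List (A × A), x = (l.map fun p => p.1 * p.2 - p.2 * p.1).sum}
  add_mem' := by
    rintro _ _ ⟨l₁, rfl⟩ ⟨l₂, rfl⟩
    exact ⟨l₁ ++ l₂, by simp⟩
  zero_mem' := ⟨[], rfl⟩
  smul_mem' := by
    rintro c _ ⟨l, rfl⟩
    refine ⟨l.map fun p => (c • p.1, p.2), ?_⟩
    simp [List.smul_sum, Function.comp_def, smul_sub]

variable {R A}

theorem commutator_mem_commutatorSums (u v : A) : u * v - v * u ∈ commutatorSums R A :=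
  ⟨[(u, v)], by simp⟩

end Commutators

theorem rotationSum_sub_degreeScale_mem {R σ : Type*} [CommRing R] (f : FreeAlgebra R σ) :
    rotationSum f - degreeScale (Nat.cast : ℕ → R) f ∈ commutatorSums R (FreeAlgebra R σ) := by
  let L : FreeAlgebra R σ →ₗ[R] FreeAlgebra R σ := rotationSum - degreeScale Nat.cast
  suffices h : ∀ w, L (basisFreeMonoid R σ w) ∈ commutatorSums R (FreeAlgebra R σ) from
    (basisFreeMonoid R σ).span_eq.ge.trans
      ((Submodule.span_le (p := (commutatorSums R _).comap L)).2 (Set.range_subset_iff.2 h))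
      (Submodule.mem_top (x := f))
  intro w
  have h_const : (w.length : R) • basisFreeMonoid R σ w =
      ∑ _p ∈ Finset.range w.length, basisFreeMonoid R σ w := by
    rw [Finset.sum_const, Finset.card_range, Nat.cast_smul_eq_nsmul]
  rw [LinearMap.sub_apply, rotationSum_basisFreeMonoid, degreeScale_basisFreeMonoid, h_const,
    ← Finset.sum_sub_distrib]
  refine Submodule.sum_mem _ fun p hp => ?_
  have hp : p ≤ w.toList.length := (Finset.mem_range.1 hp).le
  rw [List.rotate_eq_drop_append_take hp, FreeMonoid.ofList_append, basisFreeMonoid_mul]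
  conv => enter [2, 2]; rw [← FreeMonoid.ofList_toList w, ← List.take_append_drop p w.toList,
    FreeMonoid.ofList_append, basisFreeMonoid_mul]
  exact commutator_mem_commutatorSums _ _

section Traceless

variable {K σ B : Type*} [Field K] [Ring B] [Algebra K B]

def IsTraceless (τ : B →ₗ[K] K) (f : FreeAlgebra K σ) : Prop :=
  ∀ a : σ → B, τ (lift K a f) = 0

theorem lift_degreeScale (φ : ℕ → K) (a : σ → B) (f : FreeAlgebra K σ) :
    lift K a (degreeScale φ f) =
      (lift K (fun i => monomial 1 (a i)) f).sum fun d x => φ d • x := by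
  refine LinearMap.congr_fun ((basisFreeMonoid K σ).ext fun w => ?_) f
    (f := (lift K a).toLinearMap ∘ₗ degreeScale φ)
    (g := lsum (fun d => φ d • (LinearMap.id : B →ₗ[K] B)) ∘ₗ
      (lift K fun i => monomial 1 (a i)).toLinearMap)
  simp [degreeScale_basisFreeMonoid, lift_basisFreeMonoid, FreeMonoid.lift_monomial_one]

theorem IsTraceless.degreeScale [Infinite K] {τ : B →ₗ[K] K} {f : FreeAlgebra K σ}
    (hf : IsTraceless τ f) (φ : ℕ → K) : IsTraceless τ (degreeScale φ f) := by
  intro a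
  set p := lift K (fun i => monomial 1 (a i)) f
  have hp (d : ℕ) : τ (p.coeff d) = 0 :=
    map_coeff_eq_zero_of_forall_evalScalar τ p (fun t => by rw [map_lift]; exact hf _) d
  rw [lift_degreeScale, Polynomial.sum_def, map_sum]
  exact Finset.sum_eq_zero fun d _ => by rw [map_smul, hp d, smul_zero]

/-- The perturbation `a i ↦ (1 + X b) a i` has linear term `∑_p a_{<p} b a_{≥p}` on a word, which
`τ` turns into `τ (b · rotation)`. -/
theorem trace_mul_lift_rotationSum_eq_coeff_one {τ : B →ₗ[K] K}
    (hτ : ∀ x y, τ (x * y) = τ (y * x)) (a : σ → B) (b : B) (f : FreeAlgebra K σ) :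
    τ (b * lift K a (rotationSum f)) =
      τ ((lift K (fun i => C (a i) + X * C (b * a i)) f).coeff 1) := by
  refine LinearMap.congr_fun ((basisFreeMonoid K σ).ext fun w => ?_) f
    (f := τ ∘ₗ LinearMap.mulLeft K b ∘ₗ (lift K a).toLinearMap ∘ₗ rotationSum)
    (g := τ ∘ₗ (lcoeff B 1).restrictScalars K ∘ₗ
      (lift K fun i => C (a i) + X * C (b * a i)).toLinearMap)
  set l := w.toList.map a
  have hl : w.toList.map (fun i => C (a i) + X * C (b * a i)) =
      l.map fun x => C x + X * C (b * x) := by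
    simp [l, List.map_map, Function.comp_def]
  simp only [LinearMap.comp_apply, AlgHom.toLinearMap_apply, rotationSum_basisFreeMonoid,
    lift_basisFreeMonoid, FreeMonoid.lift_apply, FreeMonoid.toList_ofList, LinearMap.mulLeft_apply,
    LinearMap.restrictScalars_apply, lcoeff_apply, hl, coeff_one_prod_C_add_X_mul_C, map_sum,
    List.map_rotate]
  refine Finset.sum_congr (by simp [l, FreeMonoid.length]) fun p hp => ?_
  rw [List.rotate_eq_drop_append_take (by simpa [l] using (Finset.mem_range.1 hp).le),
    List.prod_append, ← mul_assoc, hτ, mul_assoc]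

theorem IsTraceless.trace_mul_lift_rotationSum_eq_zero [Infinite K] {τ : B →ₗ[K] K}
    (hτ : ∀ x y, τ (x * y) = τ (y * x)) {f : FreeAlgebra K σ} (hf : IsTraceless τ f)
    (a : σ → B) (b : B) : τ (b * lift K a (rotationSum f)) = 0 := by
  rw [trace_mul_lift_rotationSum_eq_coeff_one hτ]
  exact map_coeff_eq_zero_of_forall_evalScalar τ _ (fun t => by rw [map_lift]; exact hf _) 1

theorem IsTraceless.algebraMapInv_eq_zero {τ : B →ₗ[K] K} (hτ : τ 1 ≠ 0)
    {f : FreeAlgebra K σ} (hf : IsTraceless τ f) : algebraMapInv f = 0 := by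
  have h := hf 0
  rw [show (0 : σ → B) = Algebra.ofId K B ∘ (0 : σ → K) by ext; simp, ← map_lift,
    Algebra.ofId_apply, Algebra.algebraMap_eq_smul_one, map_smul, smul_eq_mul] at h
  exact (mul_eq_zero.1 h).resolve_right hτ

theorem degreeScale_natCast_degreeScale_inv [CharZero K] (f : FreeAlgebra K σ) :
    degreeScale (Nat.cast : ℕ → K) (degreeScale (fun d : ℕ => (d : K)⁻¹) f) =
      f - algebraMap K _ (algebraMapInv f) := by
  refine LinearMap.congr_fun ((basisFreeMonoid K σ).ext fun w => ?_) f
    (f := degreeScale Nat.cast ∘ₗ degreeScale fun d : ℕ => (d : K)⁻¹)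
    (g := LinearMap.id - Algebra.linearMap K (FreeAlgebra K σ) ∘ₗ algebraMapInv.toLinearMap)
  simp only [LinearMap.comp_apply, degreeScale_basisFreeMonoid, map_smul, smul_smul]
  cases w with
  | one => simp [basisFreeMonoid_eq_lift]
  | of_mul x w =>
    have hlen : ((FreeMonoid.of x * w).length : K) ≠ 0 := Nat.cast_ne_zero.2 (by simp)
    rw [inv_mul_cancel₀ hlen, one_smul]
    simp [basisFreeMonoid_eq_lift, algebraMapInv]

end Traceless

end FreeAlgebra

open FreeAlgebra in
/-- Over a field of characteristic zero, a traceless polynomial of `M_n(K)` is cyclically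
equivalent to a polynomial identity of `M_n(K)`: there is a polynomial identity `g` of
`M_n(K)` such that `f - g` is a finite sum of commutators in `K⟨X⟩`. -/
theorem traceless_cyclically_equivalent_to_identity {K : Type*} [Field K] [CharZero K]
    (n : ℕ) (hn : 1 ≤ n) (f : FreeAlgebra K ℕ)
    (htl : ∀ a : ℕ → Matrix (Fin n) (Fin n) K,
        Matrix.trace (FreeAlgebra.lift K a f) = 0) :
    ∃ g : FreeAlgebra K ℕ,
      (∀ a : ℕ → Matrix (Fin n) (Fin n) K, FreeAlgebra.lift K a g = 0) ∧
        ∃ l : List (FreeAlgebra K ℕ × FreeAlgebra K ℕ),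
          f - g = (l.map fun p => p.1 * p.2 - p.2 * p.1).sum := by
  have hf : IsTraceless (Matrix.traceLinearMap (Fin n) K K) f := htl
  set f' := degreeScale (fun d : ℕ => (d : K)⁻¹) f
  refine ⟨rotationSum f', fun a => ?_, ?_⟩
  · refine Matrix.ext_iff_trace_mul_left.2 fun b => ?_
    simpa using (hf.degreeScale _).trace_mul_lift_rotationSum_eq_zero Matrix.trace_mul_comm a b
  · have hf₀ : algebraMapInv f = 0 :=
      hf.algebraMapInv_eq_zero (by simpa using Nat.one_le_iff_ne_zero.1 hn)
    have hf' : f = degreeScale Nat.cast f' := by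
      rw [degreeScale_natCast_degreeScale_inv, hf₀, map_zero, sub_zero]
    rw [hf', ← neg_sub]
    exact neg_mem (rotationSum_sub_degreeScale_mem f')
end
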